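/- arXiv:0912.1398 — 4 statements merged into one kernel-verified Lean document; each statement's English description precedes it below -/
import Mathlib

section
/- Let L be a commutative semiring and G a linearly ordered cancellative commutative monoid. Then the operations of R(L,G) satisfy all axioms of a commutative semiring not involving zero: addition on L × G is commutative and associative, multiplication makes L × G a commutative monoid with identity (1_L, 1_G), and multiplication distributes over addition on both sides. Consequently R(L,G)⁰, obtained by adjoining an absorbing zero element, is a commutative semiring. -/
/-- Addition of the layered semiring `R(L,G)` on `L × G`. -/
def ladd {L G : Type*} [Add L] [LinearOrder G] (x y : L × G) : L × G :=
  if x.2 < y.2 then y else if y.2 < x.2 then x else (x.1 + y.1, x.2)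

/-- Multiplication of the layered semiring `R(L,G)` on `L × G` (componentwise). -/
def lmul {L G : Type*} [Mul L] [Mul G] (x y : L × G) : L × G :=
  (x.1 * y.1, x.2 * y.2)

/-- Addition of `R(L,G)⁰`, with the adjoined zero (= `none`) as additive identity. -/
def zadd {L G : Type*} [Add L] [LinearOrder G] :
    Option (L × G) → Option (L × G) → Option (L × G)
  | Option.none, y => y
  | x, Option.none => x
  | Option.some x, Option.some y => Option.some (ladd x y)

/-- Multiplication of `R(L,G)⁰`, with the adjoined zero (= `none`) absorbing. -/
def zmul {L G : Type*} [Mul L] [Mul G] :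
    Option (L × G) → Option (L × G) → Option (L × G)
  | Option.none, _ => Option.none
  | _, Option.none => Option.none
  | Option.some x, Option.some y => Option.some (lmul x y)

/-!
In `R(L,G)` the ν-value of a sum is the larger ν-value, and layers are added only on ties, so the
additive laws reduce to those of `L` after comparing ν-values. Multiplying by a fixed element is
strictly monotone on ν-values in a cancellative ordered monoid, so it preserves which of two
summands wins or whether they tie; this is distributivity. Adjoining zero, `zadd` is
`Option.merge ladd` and `zmul` is `Option.map₂ lmul`, and both constructions transport these laws.
-/

namespace Option

variable {α β γ : Type*}

theorem map₂_merge_distrib_left {f : α → β → γ} {g : β → β → β} {g' : γ → γ → γ}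
    (h : ∀ a b c, f a (g b c) = g' (f a b) (f a c)) (a : Option α) (b c : Option β) :
    map₂ f a (merge g b c) = merge g' (map₂ f a b) (map₂ f a c) := by
  cases a <;> cases b <;> cases c <;> simp [h]

theorem map₂_merge_distrib_right {f : α → β → γ} {g : α → α → α} {g' : γ → γ → γ}
    (h : ∀ a b c, f (g a b) c = g' (f a c) (f b c)) (a b : Option α) (c : Option β) :
    map₂ f (merge g a b) c = merge g' (map₂ f a c) (map₂ f b c) := by
  cases a <;> cases b <;> cases c <;> simp [h]

end Option

section Layered

variable {L G : Type*}

section Add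

variable [LinearOrder G]

theorem ladd_of_lt [Add L] {x y : L × G} (h : x.2 < y.2) : ladd x y = y := by
  simp [ladd, h]

theorem ladd_of_gt [Add L] {x y : L × G} (h : y.2 < x.2) : ladd x y = x := by
  simp [ladd, h, h.not_gt]

theorem ladd_of_eq [Add L] {x y : L × G} (h : x.2 = y.2) : ladd x y = (x.1 + y.1, x.2) := by
  simp [ladd, h]

theorem ladd_comm [AddCommMagma L] (x y : L × G) : ladd x y = ladd y x := by
  rcases lt_trichotomy x.2 y.2 with h | h | h
  · rw [ladd_of_lt h, ladd_of_gt h]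
  · rw [ladd_of_eq h, ladd_of_eq h.symm, add_comm, h]
  · rw [ladd_of_gt h, ladd_of_lt h]

theorem ladd_assoc [AddSemigroup L] (x y z : L × G) :
    ladd (ladd x y) z = ladd x (ladd y z) := by
  simp only [ladd]
  split_ifs <;> first | (exfalso; order) | simp_all [add_assoc]

instance [AddCommMagma L] : Std.Commutative (ladd : L × G → L × G → L × G) := ⟨ladd_comm⟩

instance [AddSemigroup L] : Std.Associative (ladd : L × G → L × G → L × G) := ⟨ladd_assoc⟩

theorem zadd_eq_merge [Add L] (x y : Option (L × G)) : zadd x y = x.merge ladd y := by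
  cases x <;> cases y <;> rfl

theorem zadd_comm [AddCommMagma L] (x y : Option (L × G)) : zadd x y = zadd y x := by
  simp only [zadd_eq_merge]
  exact Std.Commutative.comm x y

theorem zadd_assoc [AddSemigroup L] (x y z : Option (L × G)) :
    zadd (zadd x y) z = zadd x (zadd y z) := by
  simp only [zadd_eq_merge]
  exact Std.Associative.assoc x y z

theorem none_zadd [Add L] (x : Option (L × G)) : zadd none x = x := rfl

theorem zadd_none [Add L] (x : Option (L × G)) : zadd x none = x := by
  cases x <;> rfl

end Add

section Mul

variable [Mul L] [Mul G]

theorem zmul_eq_map₂ (x y : Option (L × G)) : zmul x y = Option.map₂ lmul x y := by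
  cases x <;> cases y <;> rfl

theorem none_zmul (x : Option (L × G)) : zmul none x = none := rfl

theorem zmul_none (x : Option (L × G)) : zmul x none = none := by
  cases x <;> rfl

end Mul

theorem zmul_comm [CommMagma L] [CommMagma G] (x y : Option (L × G)) : zmul x y = zmul y x := by
  simp only [zmul_eq_map₂]
  exact Option.map₂_comm mul_comm

theorem zmul_assoc [Semigroup L] [Semigroup G] (x y z : Option (L × G)) :
    zmul (zmul x y) z = zmul x (zmul y z) := by
  simp only [zmul_eq_map₂]
  exact Option.map₂_assoc mul_assoc

theorem one_zmul [MulOneClass L] [MulOneClass G] (x : Option (L × G)) :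
    zmul (some (1, 1)) x = x := by
  cases x <;> simp [zmul, lmul]

section Distrib

variable [Mul L] [Add L] [Mul G] [LinearOrder G]

theorem lmul_ladd [LeftDistribClass L] [MulLeftStrictMono G] (x y z : L × G) :
    lmul x (ladd y z) = ladd (lmul x y) (lmul x z) := by
  rcases lt_trichotomy y.2 z.2 with h | h | h
  · rw [ladd_of_lt h, ladd_of_lt (mul_lt_mul_right h x.2 : (lmul x y).2 < (lmul x z).2)]
  · rw [ladd_of_eq h, ladd_of_eq (congrArg (x.2 * ·) h : (lmul x y).2 = (lmul x z).2)]
    simp [lmul, mul_add]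
  · rw [ladd_of_gt h, ladd_of_gt (mul_lt_mul_right h x.2 : (lmul x z).2 < (lmul x y).2)]

theorem ladd_lmul [RightDistribClass L] [MulRightStrictMono G] (x y z : L × G) :
    lmul (ladd x y) z = ladd (lmul x z) (lmul y z) := by
  rcases lt_trichotomy x.2 y.2 with h | h | h
  · rw [ladd_of_lt h, ladd_of_lt (mul_lt_mul_left h z.2 : (lmul x z).2 < (lmul y z).2)]
  · rw [ladd_of_eq h, ladd_of_eq (congrArg (· * z.2) h : (lmul x z).2 = (lmul y z).2)]
    simp [lmul, add_mul]
  · rw [ladd_of_gt h, ladd_of_gt (mul_lt_mul_left h z.2 : (lmul y z).2 < (lmul x z).2)]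

theorem zmul_zadd [LeftDistribClass L] [MulLeftStrictMono G] (x y z : Option (L × G)) :
    zmul x (zadd y z) = zadd (zmul x y) (zmul x z) := by
  simp only [zmul_eq_map₂, zadd_eq_merge]
  exact Option.map₂_merge_distrib_left lmul_ladd x y z

theorem zadd_zmul [RightDistribClass L] [MulRightStrictMono G] (x y z : Option (L × G)) :
    zmul (zadd x y) z = zadd (zmul x z) (zmul y z) := by
  simp only [zmul_eq_map₂, zadd_eq_merge]
  exact Option.map₂_merge_distrib_right ladd_lmul x y z

end Distrib

end Layered

/-- For a commutative semiring `L` and a linearly ordered cancellative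
commutative monoid `G`, the operations of `R(L,G)` satisfy all commutative semiring
axioms not involving zero (addition commutative and associative, multiplication a
commutative monoid with identity `(1,1)`, two-sided distributivity); consequently
`R(L,G)⁰`, obtained by adjoining an absorbing zero, is a commutative semiring. -/
theorem stmt3 {L G : Type*} [CommSemiring L] [CommMonoid G] [LinearOrder G] [IsOrderedCancelMonoid G] :
    (∀ x y : L × G, ladd x y = ladd y x) ∧
    (∀ x y z : L × G, ladd (ladd x y) z = ladd x (ladd y z)) ∧
    (∀ x y : L × G, lmul x y = lmul y x) ∧
    (∀ x y z : L × G, lmul (lmul x y) z = lmul x (lmul y z)) ∧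
    (∀ x : L × G, lmul ((1 : L), (1 : G)) x = x) ∧
    (∀ x : L × G, lmul x ((1 : L), (1 : G)) = x) ∧
    (∀ x y z : L × G, lmul x (ladd y z) = ladd (lmul x y) (lmul x z)) ∧
    (∀ x y z : L × G, lmul (ladd x y) z = ladd (lmul x z) (lmul y z)) ∧
    (∀ x y : Option (L × G), zadd x y = zadd y x) ∧
    (∀ x y z : Option (L × G), zadd (zadd x y) z = zadd x (zadd y z)) ∧
    (∀ x : Option (L × G), zadd Option.none x = x ∧ zadd x Option.none = x) ∧
    (∀ x y : Option (L × G), zmul x y = zmul y x) ∧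
    (∀ x y z : Option (L × G), zmul (zmul x y) z = zmul x (zmul y z)) ∧
    (∀ x : Option (L × G), zmul (Option.some ((1 : L), (1 : G))) x = x) ∧
    (∀ x : Option (L × G), zmul Option.none x = Option.none ∧ zmul x Option.none = Option.none) ∧
    (∀ x y z : Option (L × G), zmul x (zadd y z) = zadd (zmul x y) (zmul x z)) ∧
    (∀ x y z : Option (L × G), zmul (zadd x y) z = zadd (zmul x z) (zmul y z)) := by
  -- `lmul` is definitionally the multiplication of the product monoid `L × G`.
  refine ⟨ladd_comm, ladd_assoc, mul_comm, mul_assoc, one_mul, mul_one, lmul_ladd, ladd_lmul,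
    zadd_comm, zadd_assoc, fun x => ⟨none_zadd x, zadd_none x⟩, zmul_comm, zmul_assoc, one_zmul,
    fun x => ⟨none_zmul x, zmul_none x⟩, zmul_zadd, zadd_zmul⟩
end

section
/- Let L be a commutative semiring with 1 + 1 ≠ 1 and let G be a linearly ordered commutative monoid. If the operations defined on L × G as in R(L,G) satisfy the distributive law x·(y + z) = x·y + x·z for all x, y, z ∈ L × G, then G is cancellative: ab = ac implies b = c for all a, b, c ∈ G. -/
section Layered

variable {L G : Type*}

theorem ladd_of_snd_lt [Add L] [LinearOrder G] {x y : L × G} (h : x.2 < y.2) :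
    ladd x y = y :=
  if_pos h

theorem ladd_of_snd_eq [Add L] [LinearOrder G] {x y : L × G} (h : x.2 = y.2) :
    ladd x y = (x.1 + y.1, x.2) := by
  simp [ladd, h]

/-- Multiplying `(1,b) + (1,c) = (1,c)` by `(1,a)` keeps the coefficient `1`, while
`(1,ab) + (1,ac)` sums the coefficients because the layers `ab = ac` coincide. -/
theorem one_add_one_eq_one_of_lmul_ladd [Add L] [MulOneClass L] [Mul G] [LinearOrder G]
    {a b c : G} (hbc : b < c) (habc : a * b = a * c)
    (hdistrib : lmul ((1 : L), a) (ladd (1, b) (1, c)) =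
      ladd (lmul (1, a) (1, b)) (lmul (1, a) (1, c))) :
    (1 : L) + 1 = 1 := by
  rw [ladd_of_snd_lt hbc, ladd_of_snd_eq habc] at hdistrib
  simpa [lmul] using (congrArg Prod.fst hdistrib).symm

end Layered

theorem stmt4_general {L : Type*} [CommSemiring L] (h11 : (1 : L) + 1 ≠ 1)
    {G : Type*} [CommMonoid G] [LinearOrder G]
    (hdistrib : ∀ x y z : L × G, lmul x (ladd y z) = ladd (lmul x y) (lmul x z)) :
    ∀ a b c : G, a * b = a * c → b = c := by
  intro a b c habc
  rcases lt_trichotomy b c with hlt | heq | hgt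
  · exact absurd (one_add_one_eq_one_of_lmul_ladd hlt habc (hdistrib _ _ _)) h11
  · exact heq
  · exact absurd (one_add_one_eq_one_of_lmul_ladd hgt habc.symm (hdistrib _ _ _)) h11

/-- If `1 + 1 ≠ 1` in the commutative semiring `L` and the operations of
`R(L,G)` on `L × G` satisfy the distributive law, then the linearly ordered commutative
monoid `G` is cancellative. -/
theorem stmt4 {L : Type*} [CommSemiring L] (h11 : (1 : L) + 1 ≠ 1)
    {G : Type*} [CommMonoid G] [LinearOrder G] [IsOrderedMonoid G]
    (hdistrib : ∀ x y z : L × G, lmul x (ladd y z) = ladd (lmul x y) (lmul x z)) :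
    ∀ a b c : G, a * b = a * c → b = c :=
  stmt4_general h11 hdistrib
end

section
/- Let G be a linearly ordered cancellative commutative monoid (written multiplicatively) and let α_0, α_1, …, α_m ∈ G (m ≥ 2) be the coefficients of the max-plus polynomial f(x) = max_i (α_i · x^i). Assume every monomial of f is essential, i.e., for each index i there exists x ∈ G with α_i·x^i > α_j·x^j for all j ≠ i. Then α_i · α_j > α_{i-1} · α_{j+1} whenever 1 ≤ i ≤ j ≤ m − 1. -/
/-! A monomial that strictly dominates both of its neighbours at some point `x` forces strict
log-concavity `α (k-1) α (k+1) < α k ^ 2` there, since the powers of `x` cancel in the product of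
the two inequalities. Multiplying consecutive such inequalities and cancelling telescopes them
into `α (i-1) α (j+1) < α i α j`. -/

section LogConcave

variable {G : Type*} [CommMonoid G] [LinearOrder G] [IsOrderedCancelMonoid G]

theorem mul_lt_mul_self_of_dominates_neighbours {α : ℕ → G} {k : ℕ} {x : G}
    (hlow : α k * x ^ k < α (k + 1) * x ^ (k + 1))
    (hhigh : α (k + 2) * x ^ (k + 2) < α (k + 1) * x ^ (k + 1)) :
    α k * α (k + 2) < α (k + 1) * α (k + 1) := by
  have h := mul_lt_mul_of_lt_of_lt hlow hhigh
  have hpow : x ^ k * x ^ (k + 2) = x ^ (k + 1) * x ^ (k + 1) := by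
    rw [← pow_add, ← pow_add]; ring_nf
  rw [mul_mul_mul_comm, mul_mul_mul_comm (α (k + 1)), hpow] at h
  exact lt_of_mul_lt_mul_right' h

theorem mul_lt_mul_of_strictLogConcave {α : ℕ → G} {n : ℕ}
    (hconc : ∀ k < n, α k * α (k + 2) < α (k + 1) * α (k + 1)) {i j : ℕ} (hij : i ≤ j)
    (hj : j < n) : α i * α (j + 2) < α (i + 1) * α (j + 1) := by
  induction j, hij using Nat.le_induction with
  | base => exact hconc i hj
  | succ j hij ih =>
    refine lt_of_mul_lt_mul_right' (a := α (j + 1) * α (j + 2)) ?_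
    calc α i * α (j + 1 + 2) * (α (j + 1) * α (j + 2))
        = α i * α (j + 2) * (α (j + 1) * α (j + 1 + 2)) := by ac_rfl
      _ < α (i + 1) * α (j + 1) * (α (j + 1 + 1) * α (j + 1 + 1)) :=
        mul_lt_mul_of_lt_of_lt (ih (by omega)) (hconc (j + 1) hj)
      _ = α (i + 1) * α (j + 1 + 1) * (α (j + 1) * α (j + 2)) := by ac_rfl

end LogConcave

theorem stmt5_general {G : Type*} [CommMonoid G] [LinearOrder G] [IsOrderedCancelMonoid G]
    (m : ℕ) (α : ℕ → G)
    (hess : ∀ i ≤ m, ∃ x : G, ∀ j ≤ m, j ≠ i → α j * x ^ j < α i * x ^ i) :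
    ∀ i j : ℕ, 1 ≤ i → i ≤ j → j ≤ m - 1 → α (i - 1) * α (j + 1) < α i * α j := by
  have hconc : ∀ k < m - 1, α k * α (k + 2) < α (k + 1) * α (k + 1) := fun k hk ↦ by
    obtain ⟨x, hx⟩ := hess (k + 1) (by omega)
    exact mul_lt_mul_self_of_dominates_neighbours (hx k (by omega) (by omega))
      (hx (k + 2) (by omega) (by omega))
  rintro i j hi hij hj
  obtain ⟨i, rfl⟩ := Nat.exists_eq_add_of_le' hi
  obtain ⟨j, rfl⟩ := Nat.exists_eq_add_of_le' (hi.trans hij)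
  simpa using mul_lt_mul_of_strictLogConcave hconc (Nat.le_of_succ_le_succ hij) (by omega)

/-- If every monomial of the max-plus polynomial
`f(x) = max_i (α_i · x^i)` (with `0 ≤ i ≤ m`, `m ≥ 2`) is essential — i.e., for each
index `i` there is a point `x` at which `α_i·x^i` strictly dominates all other
monomials — then `α_i · α_j > α_{i-1} · α_{j+1}` whenever `1 ≤ i ≤ j ≤ m - 1`. -/
theorem stmt5 {G : Type*} [CommMonoid G] [LinearOrder G] [IsOrderedCancelMonoid G]
    (m : ℕ) (hm : 2 ≤ m) (α : ℕ → G)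
    (hess : ∀ i ≤ m, ∃ x : G, ∀ j ≤ m, j ≠ i → α j * x ^ j < α i * x ^ i) :
    ∀ i j : ℕ, 1 ≤ i → i ≤ j → j ≤ m - 1 → α (i - 1) * α (j + 1) < α i * α j :=
  stmt5_general m α hess
end

section
/- Let L ≠ {1} be a cancellative and ℕ-cancellative commutative monoid. Let f_1, …, f_r be finitely many pairwise distinct monomials in n variables over L, i.e., f_j(k_1,…,k_n) = c_j · k_1^{e_{j,1}} ⋯ k_n^{e_{j,n}} with coefficients c_j ∈ L and exponents e_{j,i} ∈ ℕ, where distinct means the data (c_j, (e_{j,1},…,e_{j,n})) are pairwise different. Then there exist k_1, …, k_n ∈ L such that the values f_1(k_1,…,k_n), …, f_r(k_1,…,k_n) are pairwise distinct. -/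
/-- Let `L ≠ {1}` be a cancellative, ℕ-cancellative commutative monoid,
and let `f_j(k) = c_j · k_1^{e_{j,1}} ⋯ k_n^{e_{j,n}}` (`j = 1, …, r`) be finitely many
pairwise distinct monomials in `n` variables over `L` (distinct as coefficient–exponent
data).  Then there is a point `k ∈ L^n` at which the values of the `f_j` are pairwise
distinct. -/
theorem stmt6 {L : Type*} [CommMonoid L]
    (hcancel : ∀ a b c : L, a * b = a * c → b = c)
    (hNcancel : ∀ (a b : L) (n : ℕ), 1 ≤ n → a ^ n = b ^ n → a = b)
    (hne : ∃ x : L, x ≠ 1)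
    (n r : ℕ) (c : Fin r → L) (e : Fin r → Fin n → ℕ)
    (hdistinct : ∀ j j' : Fin r, j ≠ j' → (c j, e j) ≠ (c j', e j')) :
    ∃ k : Fin n → L, ∀ j j' : Fin r, j ≠ j' →
      c j * ∏ i, k i ^ e j i ≠ c j' * ∏ i, k i ^ e j' i := by
  classical
  obtain ⟨x, hx⟩ := hne
  -- powers of x are injective
  have hxinj : ∀ m m' : ℕ, x ^ m = x ^ m' → m = m' := by
    have key : ∀ m m' : ℕ, m ≤ m' → x ^ m = x ^ m' → m = m' := by
      intro m m' hle h
      by_contra hne'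
      have hd : 1 ≤ m' - m := by omega
      have h2 : x ^ m * 1 = x ^ m * x ^ (m' - m) := by
        rw [mul_one, ← pow_add]
        rw [h]; congr 1; omega
      have h1 : (1 : L) = x ^ (m' - m) := hcancel _ _ _ h2
      exact hx (hNcancel x 1 (m' - m) hd (by rw [one_pow, ← h1]))
    intro m m' h
    rcases le_total m m' with hle | hle
    · exact key m m' hle h
    · exact (key m' m hle h.symm).symm
  -- base-M digit representation is injective
  have digits_inj : ∀ (M nn : ℕ) (a b : Fin nn → ℕ),
      (∀ i, a i < M) → (∀ i, b i < M) →
      (∑ i, a i * M ^ (i : ℕ)) = (∑ i, b i * M ^ (i : ℕ)) → a = b := by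
    intro M nn
    induction nn with
    | zero => intro a b _ _ _; funext i; exact absurd i.2 (by omega)
    | succ m ih =>
      intro a b ha hb h
      have hM : 0 < M := lt_of_le_of_lt (Nat.zero_le _) (ha 0)
      rw [Fin.sum_univ_succ, Fin.sum_univ_succ] at h
      have hrw : ∀ (f : Fin (m+1) → ℕ),
          (∑ i : Fin m, f i.succ * M ^ ((i.succ : Fin (m+1)) : ℕ))
            = (∑ i : Fin m, f i.succ * M ^ (i : ℕ)) * M := by
        intro f
        rw [Finset.sum_mul]
        refine Finset.sum_congr rfl fun i _ => ?_
        have : ((i.succ : Fin (m+1)) : ℕ) = (i : ℕ) + 1 := by simp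
        rw [this, pow_succ]; ring
      rw [hrw a, hrw b] at h
      simp only [Fin.val_zero, pow_zero, mul_one] at h
      set A := ∑ i : Fin m, a i.succ * M ^ (i : ℕ) with hA
      set B := ∑ i : Fin m, b i.succ * M ^ (i : ℕ) with hB
      have h0 : a 0 = b 0 := by
        have := congrArg (· % M) h
        simp only [Nat.add_mul_mod_self_right] at this
        rwa [Nat.mod_eq_of_lt (ha 0), Nat.mod_eq_of_lt (hb 0)] at this
      have hAB : A = B := by
        have : A * M = B * M := by omega
        exact Nat.eq_of_mul_eq_mul_right hM this
      have htail : (fun i : Fin m => a i.succ) = (fun i : Fin m => b i.succ) :=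
        ih _ _ (fun i => ha i.succ) (fun i => hb i.succ) hAB
      funext i
      refine Fin.cases h0 (fun i => ?_) i
      exact congrFun htail i
  -- set up base M and codes N j
  set M : ℕ := (Finset.univ.sup fun j : Fin r => Finset.univ.sup fun i : Fin n => e j i) + 1 with hMdef
  have heM : ∀ j i, e j i < M := by
    intro j i
    have h1 : e j i ≤ Finset.univ.sup fun i : Fin n => e j i :=
      Finset.le_sup (Finset.mem_univ i)
    have h2 : (Finset.univ.sup fun i : Fin n => e j i) ≤
        Finset.univ.sup fun j : Fin r => Finset.univ.sup fun i : Fin n => e j i :=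
      Finset.le_sup (f := fun j : Fin r => Finset.univ.sup fun i : Fin n => e j i)
        (Finset.mem_univ j)
    omega
  set N : Fin r → ℕ := fun j => ∑ i, e j i * M ^ (i : ℕ) with hN
  have hNinj : ∀ j j', N j = N j' → e j = e j' := fun j j' h =>
    digits_inj M n (e j) (e j') (heM j) (heM j') h
  -- bad values of s for a pair
  set bad : Fin r × Fin r → ℕ → Prop :=
    fun p s => c p.1 * x ^ (s * N p.1) = c p.2 * x ^ (s * N p.2) with hbad
  have uniq : ∀ p s s', N p.1 ≠ N p.2 → bad p s → bad p s' → s = s' := by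
    intro p s s' hNe h1 h2
    have e1 : c p.1 * x ^ (s * N p.1 + s' * N p.2)
        = c p.2 * x ^ (s * N p.2 + s' * N p.2) := by
      rw [pow_add, pow_add, ← mul_assoc, ← mul_assoc, h1]
    have e2 : c p.1 * x ^ (s' * N p.1 + s * N p.2)
        = c p.2 * x ^ (s' * N p.2 + s * N p.2) := by
      rw [pow_add, pow_add, ← mul_assoc, ← mul_assoc, h2]
    have e3 : c p.1 * x ^ (s * N p.1 + s' * N p.2)
        = c p.1 * x ^ (s' * N p.1 + s * N p.2) := by
      rw [e1, e2, add_comm (s * N p.2)]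
    have e4 : x ^ (s * N p.1 + s' * N p.2) = x ^ (s' * N p.1 + s * N p.2) :=
      hcancel _ _ _ e3
    have e5 : s * N p.1 + s' * N p.2 = s' * N p.1 + s * N p.2 := hxinj _ _ e4
    have e6 : ((s : ℤ) - s') * ((N p.1 : ℤ) - N p.2) = 0 := by
      have := congrArg (fun t : ℕ => (t : ℤ)) e5
      push_cast at this
      linarith [this]
    rcases mul_eq_zero.mp e6 with h | h
    · exact_mod_cast sub_eq_zero.mp h
    · exact absurd (by exact_mod_cast sub_eq_zero.mp h) hNe
  -- choose s avoiding all bad values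
  set pick : Fin r × Fin r → ℕ :=
    fun p => if h : ∃ s, bad p s then h.choose else 0 with hpick
  set s : ℕ := (Finset.univ.sup pick) + 1 with hs
  have hsne : ∀ p : Fin r × Fin r, s ≠ pick p := by
    intro p
    have : pick p ≤ Finset.univ.sup pick := Finset.le_sup (Finset.mem_univ p)
    omega
  have hnotbad : ∀ p : Fin r × Fin r, N p.1 ≠ N p.2 → ¬ bad p s := by
    intro p hNe hb
    have hex : ∃ t, bad p t := ⟨s, hb⟩
    have hbp : bad p (pick p) := by
      rw [hpick]; simp only [dif_pos hex]; exact hex.choose_spec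
    exact hsne p (uniq p s (pick p) hNe hb hbp)
  -- the point
  refine ⟨fun i : Fin n => x ^ (s * M ^ (i : ℕ)), ?_⟩
  have hval : ∀ j : Fin r, (∏ i : Fin n, (x ^ (s * M ^ (i : ℕ))) ^ e j i) = x ^ (s * N j) := by
    intro j
    have h1 : ∀ i : Fin n, (x ^ (s * M ^ (i : ℕ))) ^ e j i
        = x ^ (s * (e j i * M ^ (i : ℕ))) := by
      intro i; rw [← pow_mul]; ring_nf
    rw [Finset.prod_congr rfl (fun i _ => h1 i), Finset.prod_pow_eq_pow_sum,
      ← Finset.mul_sum]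
  intro j j' hjj' heq
  rw [hval j, hval j'] at heq
  by_cases hee : e j = e j'
  · have hcc : c j ≠ c j' := by
      intro h; exact hdistinct j j' hjj' (by rw [h, hee])
    have hNN : N j = N j' := by rw [hN]; simp only [hee]
    have : x ^ (s * N j) * c j = x ^ (s * N j) * c j' := by
      rw [mul_comm (x ^ (s * N j)) (c j), heq, hNN, mul_comm]
    exact hcc (hcancel _ _ _ this)
  · have hNe : N j ≠ N j' := fun h => hee (hNinj j j' h)
    exact hnotbad (j, j') hNe heq
end
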